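/- For 0 ≤ k ≤ n, ∑_{j=0}^{k} (-1)^j q^{j(j+1)/2} qbinom(k,j) qbinom(n-j,k) = 1. -/

import Mathlib

open Finset

noncomputable section

abbrev K : Type := RatFunc ℚ

def q : K := RatFunc.X

def qint (a : K) (m : ℕ) : K := ∑ i ∈ range m, a ^ i

def qfact (a : K) (m : ℕ) : K := ∏ i ∈ range m, qint a (i + 1)

def qbinom (a : K) (n k : ℕ) : K :=
  if k ≤ n then qfact a n / (qfact a k * qfact a (n - k)) else 0

/-- q-Fibonacci polynomials F_n(x,s,q) with base `a`. -/
def qF (a x s : K) : ℕ → K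
  | 0 => 0
  | n + 1 => ∑ k ∈ range (n / 2 + 1),
      a ^ (k * (k + 1) / 2) * qbinom a (n - k) k * s ^ k * x ^ (n - 2 * k)

/-- q-Lucas polynomials L_n(x,s,q) with base `a` (L_0 = 2). -/
def qL (a x s : K) (n : ℕ) : K :=
  if n = 0 then 2 else
  ∑ k ∈ range (n / 2 + 1),
    a ^ (k * (k - 1) / 2) * (qint a n / qint a (n - k)) * qbinom a (n - k) k
      * s ^ k * x ^ (n - 2 * k)

/-- Starred variant: L*_0 = 1, L*_n = L_n for n > 0. -/
def qLs (a x s : K) (n : ℕ) : K := if n = 0 then 1 else qL a x s n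

/-- Rogers-Szegő polynomial. -/
def rs (a x y : K) (m : ℕ) : K := ∑ j ∈ range (m + 1), qbinom a m j * x ^ j * y ^ (m - j)

/-- q-Pochhammer (q;q)_m. -/
def qpoch (a : K) (m : ℕ) : K := ∏ j ∈ range m, (1 - a ^ (j + 1))

/-! Write `S k n` (`altSum`) for the left-hand side. The q-Pascal rule
`[m+1, k+1] = [m, k+1] + q^(m-k) [m, k]` in the second factor gives
`S (k+1) (n+1) = S (k+1) n + q^(n-k) T k n`, where `T k n` (`altSum'`) is the same alternating sum
with `q^(j(j-1)/2) [k+1, j]` in place of `q^(j(j+1)/2) [k, j]`. The other q-Pascal rule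
`[k+1, j+1] = [k, j] + q^(j+1) [k, j+1]` in the first factor splits `T k (n+1)` into
`S k (n+1) - S k n`. Hence, by induction on `k`, `S k n` does not depend on `n ≥ k`, and
`S k k = 1` since only the term `j = 0` survives. -/

lemma qint_add (a : K) (m n : ℕ) : qint a (m + n) = qint a m + a ^ m * qint a n := by
  simp only [qint, sum_range_add, mul_sum, pow_add]

lemma qint_ne_zero {m : ℕ} (hm : 0 < m) : qint q m ≠ 0 := by
  have hpoly : qint q m = algebraMap (Polynomial ℚ) K (∑ i ∈ range m, Polynomial.X ^ i) := by
    simp [qint, q, RatFunc.algebraMap_X]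
  rw [hpoly, map_ne_zero_iff _ (RatFunc.algebraMap_injective ℚ)]
  intro h
  simpa [hm.ne'] using congrArg (Polynomial.eval 1) h

lemma qfact_ne_zero (m : ℕ) : qfact q m ≠ 0 :=
  prod_ne_zero_iff.mpr fun i _ => qint_ne_zero i.succ_pos

lemma qfact_zero (a : K) : qfact a 0 = 1 :=
  prod_range_zero _

lemma qfact_succ (a : K) (m : ℕ) : qfact a (m + 1) = qfact a m * qint a (m + 1) :=
  prod_range_succ _ _

lemma qbinom_of_lt {n k : ℕ} (h : n < k) : qbinom q n k = 0 := by
  simp [qbinom, Nat.not_le.mpr h]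

lemma qbinom_zero_right (n : ℕ) : qbinom q n 0 = 1 := by
  rw [qbinom, if_pos n.zero_le, Nat.sub_zero, qfact_zero, one_mul,
    div_self (qfact_ne_zero n)]

lemma qbinom_self (n : ℕ) : qbinom q n n = 1 := by
  rw [qbinom, if_pos le_rfl, Nat.sub_self, qfact_zero, mul_one,
    div_self (qfact_ne_zero n)]

/-- Both q-Pascal rules come from splitting `[m+1]` as a combination of `[k+1]` and `[m-k]`. -/
lemma qbinom_succ_succ_of_qint_eq {m k : ℕ} (hkm : k < m) {x y : K}
    (h : qint q (m + 1) = x * qint q (k + 1) + y * qint q (m - k)) :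
    qbinom q (m + 1) (k + 1) = x * qbinom q m k + y * qbinom q m (k + 1) := by
  obtain ⟨d, rfl⟩ : ∃ d, m = k + 1 + d := ⟨m - (k + 1), by omega⟩
  have hd : k + 1 + d - k = d + 1 := by omega
  rw [hd] at h
  simp only [qbinom, if_pos (by omega : k + 1 ≤ k + 1 + d + 1),
    if_pos (by omega : k ≤ k + 1 + d), if_pos (by omega : k + 1 ≤ k + 1 + d), hd, show k + 1 + d + 1 - (k + 1) = d + 1 by omega,
    show k + 1 + d - (k + 1) = d by omega, qfact_succ, h]
  have := qfact_ne_zero k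
  have := qfact_ne_zero d
  have := qint_ne_zero k.succ_pos
  have := qint_ne_zero d.succ_pos
  field_simp

lemma qbinom_succ_succ (m k : ℕ) :
    qbinom q (m + 1) (k + 1) = qbinom q m k + q ^ (k + 1) * qbinom q m (k + 1) := by
  rcases lt_trichotomy k m with h | rfl | h
  · have hsplit : qint q (m + 1) = 1 * qint q (k + 1) + q ^ (k + 1) * qint q (m - k) := by
      rw [one_mul, ← qint_add]
      congr 1
      omega
    simpa using qbinom_succ_succ_of_qint_eq h hsplit
  · simp [qbinom_self, qbinom_of_lt]
  · simp [qbinom_of_lt, h, Nat.lt_succ_of_lt h]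

lemma qbinom_succ_succ' (m k : ℕ) :
    qbinom q (m + 1) (k + 1) = qbinom q m (k + 1) + q ^ (m - k) * qbinom q m k := by
  rcases lt_trichotomy k m with h | rfl | h
  · have hsplit : qint q (m + 1) = q ^ (m - k) * qint q (k + 1) + 1 * qint q (m - k) := by
      rw [one_mul, add_comm (q ^ (m - k) * _), ← qint_add]
      congr 1
      omega
    rw [qbinom_succ_succ_of_qint_eq h hsplit]
    ring
  · simp [qbinom_self, qbinom_of_lt]
  · simp [qbinom_of_lt, h, Nat.lt_succ_of_lt h]

lemma mul_succ_div_two (j : ℕ) : j * (j + 1) / 2 = j * (j - 1) / 2 + j := by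
  rw [← Nat.triangle_succ, Nat.add_sub_cancel, mul_comm]

def altSum (k n : ℕ) : K :=
  ∑ j ∈ range (k + 1), (-1 : K) ^ j * q ^ (j * (j + 1) / 2) * qbinom q k j * qbinom q (n - j) k

def altSum' (k n : ℕ) : K :=
  ∑ j ∈ range (k + 2), (-1 : K) ^ j * q ^ (j * (j - 1) / 2) * qbinom q (k + 1) j
    * qbinom q (n - j) k

lemma altSum_zero_left (n : ℕ) : altSum 0 n = 1 := by
  simp [altSum, qbinom_zero_right]

lemma altSum_self (k : ℕ) : altSum k k = 1 := by
  rw [altSum, sum_eq_single_of_mem 0 (by simp)]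
  · simp [qbinom_zero_right, qbinom_self]
  · intro j hj hj0
    rw [qbinom_of_lt (by simp only [mem_range] at hj; omega : k - j < k), mul_zero]

lemma altSum_succ_succ {k n : ℕ} (h : k < n) :
    altSum (k + 1) (n + 1) = altSum (k + 1) n + q ^ (n - k) * altSum' k n := by
  rw [altSum, altSum, altSum', mul_sum, ← sum_add_distrib]
  refine sum_congr rfl fun j hj => ?_
  rw [mem_range] at hj
  rw [show n + 1 - j = n - j + 1 by omega, qbinom_succ_succ']
  by_cases hjk : j + k ≤ n
  · have hexp : j * (j + 1) / 2 + (n - j - k) = n - k + j * (j - 1) / 2 := by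
      rw [mul_succ_div_two]; omega
    linear_combination (-1 : K) ^ j * qbinom q (k + 1) j * qbinom q (n - j) k
      * congrArg (q ^ ·) hexp
  · rw [qbinom_of_lt (by omega : n - j < k)]
    ring

lemma altSum'_succ (k n : ℕ) : altSum' k (n + 1) = altSum k (n + 1) - altSum k n := by
  set g : ℕ → K := fun j =>
    (-1 : K) ^ j * q ^ (j * (j + 1) / 2) * qbinom q k j * qbinom q (n + 1 - j) k with hg
  have hterm : ∀ i ∈ range (k + 1),
      (-1 : K) ^ (i + 1) * q ^ ((i + 1) * (i + 1 - 1) / 2) * qbinom q (k + 1) (i + 1)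
        * qbinom q (n + 1 - (i + 1)) k
      = g (i + 1) - (-1 : K) ^ i * q ^ (i * (i + 1) / 2) * qbinom q k i * qbinom q (n - i) k := by
    intro i _
    simp only [hg]
    rw [mul_succ_div_two (i + 1), show i * (i + 1) / 2 = (i + 1) * (i + 1 - 1) / 2 by
      rw [Nat.add_sub_cancel, mul_comm], qbinom_succ_succ, Nat.add_sub_add_right n 1 i]
    ring
  calc altSum' k (n + 1)
      = ∑ i ∈ range (k + 1), (g (i + 1) - (-1 : K) ^ i * q ^ (i * (i + 1) / 2) * qbinom q k i
          * qbinom q (n - i) k) + g 0 := by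
        rw [altSum', sum_range_succ', sum_congr rfl hterm]
        simp [hg, qbinom_zero_right]
    _ = ∑ j ∈ range (k + 2), g j - altSum k n := by
        rw [sum_sub_distrib, sum_range_succ' g, altSum]
        ring
    _ = altSum k (n + 1) - altSum k n := by
        simp only [sum_range_succ _ (k + 1), hg, qbinom_of_lt k.lt_succ_self, mul_zero, zero_mul,
          add_zero, altSum]

theorem stmt9 (n k : ℕ) (hk : k ≤ n) :
    ∑ j ∈ range (k + 1), (-1 : K) ^ j * q ^ (j * (j + 1) / 2) * qbinom q k j
      * qbinom q (n - j) k = 1 := by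
  change altSum k n = 1
  induction k generalizing n with
  | zero => exact altSum_zero_left n
  | succ k ih =>
    induction n, hk using Nat.le_induction with
    | base => exact altSum_self _
    | succ n hn ihn =>
      obtain ⟨m, rfl⟩ : ∃ m, n = m + 1 := ⟨n - 1, by omega⟩
      rw [altSum_succ_succ hn, ihn, altSum'_succ, ih _ (by omega), ih _ (by omega), sub_self,
        mul_zero, add_zero]
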